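/- Fix λ > 0 and ε ∈ (0,1), and define b_V^ε : ℝ → ℝ by b_V^ε(x) = −1/ε for 0 ≤ x ≤ ε, b_V^ε(x) = 1/ε for −ε ≤ x < 0, and b_V^ε(x) = 0 otherwise. If f : ℝ → ℝ is bounded, continuously differentiable on ℝ, twice differentiable at every point x ∉ {−ε, 0, ε}, and satisfies the homogeneous equation λ f(x) − (1/2) f''(x) − b_V^ε(x) f'(x) = 0 at every such x, then f is identically zero. -/

import Mathlib

/-!
Maximum principle. If `f > 0` somewhere, then for small `k > 0` and `δ > 0` the function
`g = f - δ cosh (k x)` tends to `-∞` at infinity, so it attains a positive global maximum at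
some `a`. Since `½ φ'' + B |φ'| ≤ λ φ` for `φ = cosh (k x)` when `k (k + 2B) ≤ 2λ`, the
subsolution inequality for `f` gives `g'' ≥ 2λ g - 2B |g'|` away from the finitely many
kinks. As `g (a) > 0` and `g' (a) = 0`, this makes `g'' > 0` just to the right of `a`, so `g`
increases there — a contradiction. Applying this to `f` and `-f` gives `f = 0`.
-/

open Filter Real Set Topology

lemma Real.abs_sinh_le_cosh (x : ℝ) : |sinh x| ≤ cosh x := by
  rw [abs_sinh, ← cosh_abs]
  exact (sinh_lt_cosh _).le

lemma tendsto_cosh_mul_cocompact {k : ℝ} (hk : k ≠ 0) :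
    Tendsto (fun x => cosh (k * x)) (cocompact ℝ) atTop := by
  have hlow : ∀ x : ℝ, exp (|k| * ‖x‖) / 2 ≤ cosh (k * x) := fun x => by
    rw [Real.norm_eq_abs, ← abs_mul, ← cosh_abs (k * x), cosh_eq]
    linarith [exp_pos (-|k * x|)]
  exact tendsto_atTop_mono hlow <| (tendsto_exp_atTop.comp <|
    tendsto_norm_cocompact_atTop.const_mul_atTop (abs_pos.2 hk)).atTop_div_const two_pos

lemma Set.Finite.eventually_notMem_nhdsNE {X : Type*} [TopologicalSpace X] [T1Space X]
    {S : Set X} (hS : S.Finite) (a : X) : ∀ᶠ x in 𝓝[≠] a, x ∉ S := by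
  filter_upwards [nhdsWithin_le_nhds <| (hS.sdiff (t := {a})).isClosed.compl_mem_nhds (by simp),
    self_mem_nhdsWithin] with x hxS hxa hx
  exact hxS ⟨hx, hxa⟩

lemma lt_of_deriv_eq_zero_of_second_deriv_pos {g g' g'' : ℝ → ℝ} {a b : ℝ} (hab : a < b)
    (hg : ContinuousOn g (Icc a b)) (hg' : ∀ x ∈ Ioo a b, HasDerivAt g (g' x) x)
    (hg'c : ContinuousOn g' (Icc a b)) (hg'' : ∀ x ∈ Ioo a b, HasDerivAt g' (g'' x) x)
    (hpos : ∀ x ∈ Ioo a b, 0 < g'' x) (ha : g' a = 0) : g a < g b := by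
  have hmono' : StrictMonoOn g' (Icc a b) :=
    strictMonoOn_of_hasDerivWithinAt_pos (convex_Icc a b) hg'c
      (fun x hx => by rw [interior_Icc] at hx ⊢; exact (hg'' x hx).hasDerivWithinAt)
      (fun x hx => by rw [interior_Icc] at hx; exact hpos x hx)
  have hmono : StrictMonoOn g (Icc a b) :=
    strictMonoOn_of_hasDerivWithinAt_pos (convex_Icc a b) hg
      (fun x hx => by rw [interior_Icc] at hx ⊢; exact (hg' x hx).hasDerivWithinAt)
      (fun x hx => by
        rw [interior_Icc] at hx
        exact ha ▸ hmono' (left_mem_Icc.2 hab.le) (Ioo_subset_Icc_self hx) hx.1)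
  exact hmono (left_mem_Icc.2 hab.le) (right_mem_Icc.2 hab.le) hab

theorem IsLocalMax.nonpos_of_le_second_deriv {g g' g'' : ℝ → ℝ} {S : Set ℝ} (hS : S.Finite)
    {lam B a : ℝ} (hlam : 0 < lam) (hg : ∀ x, HasDerivAt g (g' x) x) (hg' : Continuous g')
    (hg'' : ∀ x ∉ S, HasDerivAt g' (g'' x) x)
    (hineq : ∀ x ∉ S, lam * g x - B * |g' x| ≤ g'' x) (hmax : IsLocalMax g a) : g a ≤ 0 := by
  by_contra! hpos
  have hg'a : g' a = 0 := hmax.hasDerivAt_eq_zero (hg a)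
  have hgc : Continuous g := continuous_iff_continuousAt.2 fun x => (hg x).continuousAt
  have hlower : ∀ᶠ x in 𝓝 a, 0 < lam * g x - B * |g' x| :=
    (by fun_prop : Continuous fun x => lam * g x - B * |g' x|).continuousAt.eventually
      (lt_mem_nhds (by simpa [hg'a] using mul_pos hlam hpos))
  obtain ⟨b, hab, hb⟩ := mem_nhdsGT_iff_exists_Ioo_subset.1 <|
    ((hS.eventually_notMem_nhdsNE a).filter_mono (nhdsWithin_mono _ fun x hx => ne_of_gt hx)).and
      (nhdsWithin_le_nhds (hlower.and hmax))
  obtain ⟨c, hac, hcb⟩ := exists_between (mem_Ioi.1 hab)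
  have hsub : Ioo a c ⊆ Ioo a b := Ioo_subset_Ioo_right hcb.le
  have := lt_of_deriv_eq_zero_of_second_deriv_pos hac hgc.continuousOn (fun x _ => hg x)
    hg'.continuousOn (fun x hx => hg'' x (hb (hsub hx)).1)
    (fun x hx => (hb (hsub hx)).2.1.trans_le (hineq x (hb (hsub hx)).1)) hg'a
  exact (hb ⟨hac, hcb⟩).2.2.not_gt this

lemma hasDerivAt_cosh_const_mul (k x : ℝ) :
    HasDerivAt (fun y => cosh (k * y)) (k * sinh (k * x)) x := by
  simpa [mul_comm] using ((hasDerivAt_id x).const_mul k).cosh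

lemma hasDerivAt_sinh_const_mul (k x : ℝ) :
    HasDerivAt (fun y => sinh (k * y)) (k * cosh (k * x)) x := by
  simpa [mul_comm] using ((hasDerivAt_id x).const_mul k).sinh

theorem nonpos_of_resolvent_subsolution {lam B : ℝ} (hlam : 0 < lam) {S : Set ℝ}
    (hS : S.Finite) {b f f' f'' : ℝ → ℝ} (hb : ∀ x, |b x| ≤ B) (hbdd : BddAbove (range f))
    (hf : ∀ x, HasDerivAt f (f' x) x) (hf' : Continuous f')
    (hf'' : ∀ x ∉ S, HasDerivAt f' (f'' x) x)
    (hsub : ∀ x ∉ S, lam * f x - 1 / 2 * f'' x - b x * f' x ≤ 0) (x : ℝ) : f x ≤ 0 := by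
  by_contra! hx
  obtain ⟨k, hkB, hk⟩ : ∃ k, k * (k + 2 * B) < 2 * lam ∧ 0 < k := by
    have hlim : Tendsto (fun k : ℝ => k * (k + 2 * B)) (𝓝[>] 0) (𝓝 0) :=
      ((continuous_id.mul (continuous_id.add continuous_const)).tendsto' 0 0 (by simp)).mono_left
        nhdsWithin_le_nhds
    exact ((hlim.eventually (gt_mem_nhds (by positivity))).and self_mem_nhdsWithin).exists
  set δ := f x / (2 * cosh (k * x))
  have hδ : 0 < δ := div_pos hx (by positivity)
  set g := fun y => f y - δ * cosh (k * y)
  set g' := fun y => f' y - δ * (k * sinh (k * y))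
  have hg : ∀ y, HasDerivAt g (g' y) y := fun y =>
    (hf y).sub ((hasDerivAt_cosh_const_mul k y).const_mul δ)
  have hg' : ∀ y ∉ S, HasDerivAt g' (f'' y - δ * (k * (k * cosh (k * y)))) y := fun y hy =>
    (hf'' y hy).sub (((hasDerivAt_sinh_const_mul k y).const_mul k).const_mul δ)
  have hgc : Continuous g := continuous_iff_continuousAt.2 fun y => (hg y).continuousAt
  obtain ⟨M, hM⟩ := hbdd
  obtain ⟨a, ha⟩ := hgc.exists_forall_ge <|
    (tendsto_atBot_add_left_of_ge _ M (fun y => hM (mem_range_self y))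
      (tendsto_neg_atTop_atBot.comp ((tendsto_cosh_mul_cocompact hk.ne').const_mul_atTop hδ))).congr
      fun y => (sub_eq_add_neg _ _).symm
  have hineq : ∀ y ∉ S,
      2 * lam * g y - 2 * B * |g' y| ≤ f'' y - δ * (k * (k * cosh (k * y))) := fun y hy => by
    have hdrift : b y * g' y ≤ B * |g' y| := (le_abs_self _).trans <| by
      rw [abs_mul]; exact mul_le_mul_of_nonneg_right (hb y) (abs_nonneg _)
    have hbarrier : b y * sinh (k * y) ≤ B * cosh (k * y) := (le_abs_self _).trans <| by
      rw [abs_mul]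
      exact mul_le_mul (hb y) (abs_sinh_le_cosh _) (abs_nonneg _) ((abs_nonneg _).trans (hb y))
    have h1 : 0 ≤ δ * cosh (k * y) * (2 * lam - k * (k + 2 * B)) := by
      have := cosh_pos (k * y); have := sub_pos.2 hkB; positivity
    have h2 : 0 ≤ δ * k * (B * cosh (k * y) - b y * sinh (k * y)) := by
      have := sub_nonneg.2 hbarrier; positivity
    simp only [g, g'] at hdrift ⊢
    linarith [hsub y hy]
  have hmax := IsLocalMax.nonpos_of_le_second_deriv hS (mul_pos two_pos hlam) hg
    (by fun_prop) hg' hineq (IsMaxOn.isLocalMax (fun y _ => ha y) univ_mem)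
  have hgx : g x = f x / 2 := by
    simp only [g, δ]; field_simp; ring
  linarith [ha x]

theorem stmt_8_general (lam : ℝ) (hlam : 0 < lam) (ε : ℝ)
    (bV : ℝ → ℝ)
    (hbV : ∀ x, bV x = if 0 ≤ x ∧ x ≤ ε then -1/ε
                       else if -ε ≤ x ∧ x < 0 then 1/ε else 0)
    (f : ℝ → ℝ)
    (hbdd : ∃ M : ℝ, ∀ x, |f x| ≤ M)
    (hf : ContDiff ℝ 1 f)
    (hf2 : ∀ x, x ∉ ({-ε, 0, ε} : Set ℝ) → DifferentiableAt ℝ (deriv f) x)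
    (heq : ∀ x, x ∉ ({-ε, 0, ε} : Set ℝ) →
      lam * f x - (1/2) * deriv (deriv f) x - bV x * deriv f x = 0) :
    ∀ x, f x = 0 := by
  have hS : ({-ε, 0, ε} : Set ℝ).Finite := toFinite _
  have hb : ∀ x, |bV x| ≤ |1 / ε| := fun x => by
    rw [hbV]; split_ifs <;> simp [neg_div]
  obtain ⟨M, hM⟩ := hbdd
  have hfd : ∀ x, HasDerivAt f (deriv f x) x := fun x =>
    (hf.differentiable one_ne_zero x).hasDerivAt
  have hf' : Continuous (deriv f) := hf.continuous_deriv le_rfl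
  intro x
  apply le_antisymm
  · exact nonpos_of_resolvent_subsolution hlam hS hb
      ⟨M, forall_mem_range.2 fun y => (abs_le.1 (hM y)).2⟩ hfd hf'
      (fun y hy => (hf2 y hy).hasDerivAt) (fun y hy => (heq y hy).le) x
  · have := nonpos_of_resolvent_subsolution (f := fun y => -f y) hlam hS hb
      ⟨M, forall_mem_range.2 fun y => by linarith [abs_le.1 (hM y)]⟩ (fun y => (hfd y).neg)
      hf'.neg (fun y hy => (hf2 y hy).hasDerivAt.neg) (fun y hy => by linarith [heq y hy]) x
    linarith

/-- **Uniqueness for the resolvent equation of the comparison diffusion.**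
For `λ > 0`, `ε ∈ (0,1)` and the drift `b_V^ε`, any bounded `C¹` function
`f`, twice differentiable away from `{-ε, 0, ε}` and solving the homogeneous
equation `λ f - (1/2) f'' - b_V^ε f' = 0` there, vanishes identically. -/
theorem stmt_8 (lam : ℝ) (hlam : 0 < lam) (ε : ℝ) (hε : ε ∈ Set.Ioo (0:ℝ) 1)
    (bV : ℝ → ℝ)
    (hbV : ∀ x, bV x = if 0 ≤ x ∧ x ≤ ε then -1/ε
                       else if -ε ≤ x ∧ x < 0 then 1/ε else 0)
    (f : ℝ → ℝ)
    (hbdd : ∃ M : ℝ, ∀ x, |f x| ≤ M)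
    (hf : ContDiff ℝ 1 f)
    (hf2 : ∀ x, x ∉ ({-ε, 0, ε} : Set ℝ) → DifferentiableAt ℝ (deriv f) x)
    (heq : ∀ x, x ∉ ({-ε, 0, ε} : Set ℝ) →
      lam * f x - (1/2) * deriv (deriv f) x - bV x * deriv f x = 0) :
    ∀ x, f x = 0 :=
  stmt_8_general lam hlam ε bV hbV f hbdd hf hf2 heq
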